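/- arXiv:1804.03367 — 2 statements merged into one kernel-verified Lean document; each statement's English description precedes it below -/
import Mathlib

section
/- In the setting of the previous polar-coordinate decomposition X_h = a(θ)∂_ρ + (1/ρ)W with (n−1)a + div_μ(W) = 0, let F be a smooth positive function on a neighbourhood of an invariant compact set K_+ ⊂ Z_0 with div_{Fμ}(W) = dF(W)/F + div_μ(W) ≤ −c < 0. Then the function k_+ := F^{-1/(n-1)} · ρ satisfies dk_+(X_h) = −(1/(n−1)) F^{-1/(n-1)} div_{Fμ}(W) ≥ (c/(n−1)) F^{-1/(n-1)} > 0; in particular k_+ is an escape function (dk_+(X_h) bounded below by a positive constant) on a conic neighbourhood of the cone over K_+. -/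
open scoped BigOperators

/-- Divergence of `W` with respect to the density `μ` in coordinates on `Z₀ ≅ ℝᵐ`. -/
noncomputable def divDensity (m : ℕ) (μ : (Fin m → ℝ) → ℝ) (W : (Fin m → ℝ) → (Fin m → ℝ))
    (θ : Fin m → ℝ) : ℝ :=
  (∑ i, fderiv ℝ (fun y => μ y * W y i) θ (Pi.single i 1)) / μ θ

/-- With `X_h = a(θ)∂_ρ + (1/ρ)W` on the cone `(0,∞) × Z₀`, the Liouville identity
`(n−1)a + div_μ(W) = 0`, and a positive `F` near the invariant compact `K₊` with
`div_{Fμ}(W) = dF(W)/F + div_μ(W) ≤ −c < 0`, the function `k₊ = F^{−1/(n−1)}·ρ` satisfies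
`dk₊(X_h) = −(1/(n−1))·F^{−1/(n−1)}·div_{Fμ}(W) ≥ (c/(n−1))·F^{−1/(n−1)} > 0`: it is an escape
function on the conic neighbourhood over `U`. -/
theorem escape_function_near_attractor (n m : ℕ) (hn : 2 ≤ n)
    (a : (Fin m → ℝ) → ℝ) (W : (Fin m → ℝ) → (Fin m → ℝ)) (μ : (Fin m → ℝ) → ℝ)
    (ha : ContDiff ℝ (⊤ : ℕ∞) a) (hW : ContDiff ℝ (⊤ : ℕ∞) W) (hμ : ContDiff ℝ (⊤ : ℕ∞) μ)
    (hμpos : ∀ θ, 0 < μ θ)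
    (hLiou : ∀ θ : Fin m → ℝ, ((n : ℝ) - 1) * a θ + divDensity m μ W θ = 0)
    (K U : Set (Fin m → ℝ)) (hKc : IsCompact K) (hU : IsOpen U) (hKU : K ⊆ U)
    (F : (Fin m → ℝ) → ℝ) (hF : ContDiffOn ℝ (⊤ : ℕ∞) F U) (hFpos : ∀ θ ∈ U, 0 < F θ)
    (c : ℝ) (hc : 0 < c)
    (hWH : ∀ θ ∈ U, fderiv ℝ F θ (W θ) / F θ + divDensity m μ W θ ≤ -c) :
    ∀ ρ : ℝ, 0 < ρ → ∀ θ ∈ U,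
      (fderiv ℝ (fun z : ℝ × (Fin m → ℝ) => F z.2 ^ (-(1 : ℝ) / ((n : ℝ) - 1)) * z.1)
          (ρ, θ) (a θ, ρ⁻¹ • W θ)
        = -(1 / ((n : ℝ) - 1)) * F θ ^ (-(1 : ℝ) / ((n : ℝ) - 1))
            * (fderiv ℝ F θ (W θ) / F θ + divDensity m μ W θ)) ∧
      (c / ((n : ℝ) - 1)) * F θ ^ (-(1 : ℝ) / ((n : ℝ) - 1))
        ≤ fderiv ℝ (fun z : ℝ × (Fin m → ℝ) => F z.2 ^ (-(1 : ℝ) / ((n : ℝ) - 1)) * z.1)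
            (ρ, θ) (a θ, ρ⁻¹ • W θ) := by
  intro ρ hρ θ hθ
  have hs : (0:ℝ) < (n:ℝ) - 1 := by
    have h2 : (2:ℝ) ≤ (n:ℝ) := by exact_mod_cast hn
    linarith
  have hFθ : 0 < F θ := hFpos θ hθ
  have hdF : DifferentiableAt ℝ F θ :=
    (hF.contDiffAt (hU.mem_nhds hθ)).differentiableAt (by simp)
  set α : ℝ := -(1:ℝ) / ((n:ℝ) - 1) with hα
  have hFd : HasFDerivAt F (fderiv ℝ F θ) θ := hdF.hasFDerivAt
  have hg : HasFDerivAt (fun y => F y ^ α)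
      ((α * F θ ^ (α - 1)) • fderiv ℝ F θ) θ :=
    hFd.rpow_const (Or.inl hFθ.ne')
  have h1 : HasFDerivAt (fun z : ℝ × (Fin m → ℝ) => F z.2 ^ α)
      (((α * F θ ^ (α - 1)) • fderiv ℝ F θ).comp
        (ContinuousLinearMap.snd ℝ ℝ (Fin m → ℝ))) (ρ, θ) :=
    HasFDerivAt.comp (f := @Prod.snd ℝ (Fin m → ℝ)) (ρ, θ) hg hasFDerivAt_snd
  have h2 : HasFDerivAt (fun z : ℝ × (Fin m → ℝ) => z.1)
      (ContinuousLinearMap.fst ℝ ℝ (Fin m → ℝ)) (ρ, θ) := hasFDerivAt_fst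
  have hmul := (show HasFDerivAt (fun z : ℝ × (Fin m → ℝ) => F z.2 ^ α * z.1) _ (ρ, θ) from h1.mul h2).fderiv
  have heval : fderiv ℝ (fun z : ℝ × (Fin m → ℝ) => F z.2 ^ α * z.1)
      (ρ, θ) (a θ, ρ⁻¹ • W θ)
      = F θ ^ α * a θ + α * F θ ^ (α - 1) * fderiv ℝ F θ (W θ) := by
    rw [hmul]
    simp [ContinuousLinearMap.add_apply, ContinuousLinearMap.smul_apply,
      ContinuousLinearMap.comp_apply, map_smul, smul_eq_mul]
    field_simp
  have hsub : F θ ^ (α - 1) = F θ ^ α / F θ := by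
    rw [Real.rpow_sub hFθ, Real.rpow_one]
  have haθ : a θ = -(divDensity m μ W θ) / ((n:ℝ) - 1) := by
    have := hLiou θ
    field_simp
    linarith
  have heq : fderiv ℝ (fun z : ℝ × (Fin m → ℝ) => F z.2 ^ α * z.1)
      (ρ, θ) (a θ, ρ⁻¹ • W θ)
      = -(1 / ((n:ℝ) - 1)) * F θ ^ α
          * (fderiv ℝ F θ (W θ) / F θ + divDensity m μ W θ) := by
    rw [heval, hsub, haθ, hα]
    field_simp
    ring
  refine ⟨heq, ?_⟩
  rw [heq]
  have hP : 0 < F θ ^ α := Real.rpow_pos_of_pos hFθ α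
  have hH := hWH θ hθ
  set H := fderiv ℝ F θ (W θ) / F θ + divDensity m μ W θ with hHdef
  have key : c * F θ ^ α ≤ F θ ^ α * (-H) := by nlinarith
  calc c / ((n:ℝ) - 1) * F θ ^ α = c * F θ ^ α / ((n:ℝ) - 1) := by ring
    _ ≤ F θ ^ α * (-H) / ((n:ℝ) - 1) := by gcongr
    _ = -(1 / ((n:ℝ) - 1)) * F θ ^ α * H := by ring
end

section
/- Let X_h admit an escape function k on Σ_0. Then Γ_+ ⊂ {k > 0} and Γ_- ⊂ {k < 0}. -/
open Filter Set

/-- `Γ₊ ⊂ {k > 0}` and `Γ₋ ⊂ {k < 0}`: for an escape function `k` on the cone `(0,∞) × Z₀`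
(rate `≥ δ > 0` along trajectories, `|k| ≤ C·ρ` so `k → 0` at the vertex), any point whose
trajectory reaches the vertex at a finite negative time has `k > 0`, and any point whose
trajectory reaches the vertex at a finite positive time has `k < 0`. -/
theorem gamma_plus_pos_gamma_minus_neg {Z : Type*} [TopologicalSpace Z]
    (k : ℝ × Z → ℝ) (δ C : ℝ) (hδ : 0 < δ) (hC : 0 < C)
    (hbound : ∀ ρ : ℝ, 0 < ρ → ∀ θ : Z, |k (ρ, θ)| ≤ C * ρ) :
    (∀ (t₀ : ℝ) (γ : ℝ → ℝ × Z), t₀ < 0 →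
      (∀ t ∈ Ioc t₀ 0, 0 < (γ t).1) →
      (∀ s t : ℝ, s ∈ Ioc t₀ 0 → t ∈ Ioc t₀ 0 → s ≤ t →
        δ * (t - s) ≤ k (γ t) - k (γ s)) →
      Tendsto (fun t => (γ t).1) (nhdsWithin t₀ (Ioi t₀)) (nhds 0) →
      0 < k (γ 0)) ∧
    (∀ (t₁ : ℝ) (γ : ℝ → ℝ × Z), 0 < t₁ →
      (∀ t ∈ Ico 0 t₁, 0 < (γ t).1) →
      (∀ s t : ℝ, s ∈ Ico 0 t₁ → t ∈ Ico 0 t₁ → s ≤ t →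
        δ * (t - s) ≤ k (γ t) - k (γ s)) →
      Tendsto (fun t => (γ t).1) (nhdsWithin t₁ (Iio t₁)) (nhds 0) →
      k (γ 0) < 0) := by
  constructor
  · intro t₀ γ ht₀ hpos hrate htend
    set ε : ℝ := δ * (-t₀) / 2 with hε_def
    have hε : 0 < ε := by
      have : (0:ℝ) < -t₀ := by linarith
      positivity
    have h1 : ∀ᶠ t in nhdsWithin t₀ (Ioi t₀), (γ t).1 < ε / C :=
      htend.eventually (Iio_mem_nhds (by positivity))
    have h2 : Ioo t₀ (t₀ / 2) ∈ nhdsWithin t₀ (Ioi t₀) :=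
      Ioo_mem_nhdsGT_of_mem ⟨le_refl _, by linarith⟩
    obtain ⟨t, htρ, ht⟩ := (h1.and h2).exists
    have htIoc : t ∈ Ioc t₀ 0 := ⟨ht.1, by linarith [ht.2]⟩
    have hρ := hpos t htIoc
    have hk : |k (γ t)| ≤ C * (γ t).1 := by
      have := hbound (γ t).1 hρ (γ t).2
      simpa using this
    have hkabs : C * (γ t).1 < ε := by
      have := (mul_lt_mul_iff_right₀ hC).mpr htρ
      calc C * (γ t).1 < C * (ε / C) := this
        _ = ε := by field_simp
    have hklow : -ε < k (γ t) := by
      have := (abs_le.mp hk).1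
      linarith
    have hr := hrate t 0 htIoc ⟨ht₀, le_refl 0⟩ htIoc.2
    have : δ * (0 - t) ≥ ε := by
      rw [hε_def]
      have : -t ≥ -t₀ / 2 := by linarith [ht.2]
      nlinarith
    linarith
  · intro t₁ γ ht₁ hpos hrate htend
    set ε : ℝ := δ * t₁ / 2 with hε_def
    have hε : 0 < ε := by positivity
    have h1 : ∀ᶠ t in nhdsWithin t₁ (Iio t₁), (γ t).1 < ε / C :=
      htend.eventually (Iio_mem_nhds (by positivity))
    have h2 : Ioo (t₁ / 2) t₁ ∈ nhdsWithin t₁ (Iio t₁) :=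
      Ioo_mem_nhdsLT_of_mem ⟨by linarith, le_refl _⟩
    obtain ⟨t, htρ, ht⟩ := (h1.and h2).exists
    have htIco : t ∈ Ico 0 t₁ := ⟨by linarith [ht.1], ht.2⟩
    have hρ := hpos t htIco
    have hk : |k (γ t)| ≤ C * (γ t).1 := by
      have := hbound (γ t).1 hρ (γ t).2
      simpa using this
    have hkabs : C * (γ t).1 < ε := by
      have := (mul_lt_mul_iff_right₀ hC).mpr htρ
      calc C * (γ t).1 < C * (ε / C) := this
        _ = ε := by field_simp
    have hkhigh : k (γ t) < ε := by
      have := (abs_le.mp hk).2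
      linarith
    have hr := hrate 0 t ⟨le_refl 0, ht₁⟩ htIco htIco.1
    have : δ * (t - 0) ≥ ε := by
      rw [hε_def]
      have : t ≥ t₁ / 2 := le_of_lt ht.1
      nlinarith
    linarith
end
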